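/- Let (V; ρ, θ, D, R_V) be a representation of a modified Rota-Baxter Lie-Yamaguti algebra (L,[-,-],{-,-,-},R), and define ρ_R(x)u := ρ(Rx)u - R_V(ρ(x)u) and θ_R(x,y)u := θ(Rx,Ry)u + θ(Rx,y)u + θ(x,Ry)u - R_V(θ(x,y)u). Then R_V satisfies the modified Rota-Baxter compatibility conditions with respect to ρ_R and θ_R: for all x, y in L and u in V, ρ_R(Rx)R_V u = R_V(ρ_R(Rx)u + ρ_R(x)R_V u) - ρ_R(x)u, and θ_R(Rx,Ry)R_V u = R_V(θ_R(Rx,Ry)u + θ_R(Rx,y)R_V u + θ_R(x,Ry)R_V u + θ_R(x,y)u) - θ_R(Rx,y)u - θ_R(x,y)R_V u - θ_R(x,Ry)u. -/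

import Mathlib

/-- A Lie-Yamaguti algebra: bilinear bracket `br`, trilinear bracket `tr`,
satisfying (LY1)-(LY6). -/
structure LieYamaguti (K : Type*) (L : Type*) [Field K] [AddCommGroup L] [Module K L] where
  br : L →ₗ[K] L →ₗ[K] L
  tr : L →ₗ[K] L →ₗ[K] L →ₗ[K] L
  ly1 : ∀ x y, br x y = - br y x
  ly2 : ∀ x y z, tr x y z = - tr y x z
  ly3 : ∀ x y z,
    br (br x y) z + br (br y z) x + br (br z x) y + tr x y z + tr y z x + tr z x y = 0
  ly4 : ∀ x y z a, tr (br x y) z a + tr (br z x) y a + tr (br y z) x a = 0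
  ly5 : ∀ a b x y, tr a b (br x y) = br (tr a b x) y + br x (tr a b y)
  ly6 : ∀ a b x y z,
    tr a b (tr x y z) = tr (tr a b x) y z + tr x (tr a b y) z + tr x y (tr a b z)

/-- A modified Rota-Baxter operator on a Lie-Yamaguti algebra. -/
def IsMRB {K L : Type*} [Field K] [AddCommGroup L] [Module K L]
    (A : LieYamaguti K L) (R : L →ₗ[K] L) : Prop :=
  (∀ x y, A.br (R x) (R y) = R (A.br (R x) y + A.br x (R y)) - A.br x y) ∧
  (∀ x y z, A.tr (R x) (R y) (R z) =
      R (A.tr x (R y) (R z) + A.tr (R x) y (R z) + A.tr (R x) (R y) z + A.tr x y z)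
      - A.tr (R x) y z - A.tr x (R y) z - A.tr x y (R z))

/-- A representation of a Lie-Yamaguti algebra on `V`, axioms (R1)-(R7). -/
structure LYRep (K L V : Type*) [Field K] [AddCommGroup L] [Module K L]
    [AddCommGroup V] [Module K V] (A : LieYamaguti K L) where
  ρ : L →ₗ[K] Module.End K V
  θ : L →ₗ[K] L →ₗ[K] Module.End K V
  D : L →ₗ[K] L →ₗ[K] Module.End K V
  r1 : ∀ x y, D x y - θ y x + θ x y + ρ (A.br x y) - ρ x * ρ y + ρ y * ρ x = 0
  r2 : ∀ x y z, D (A.br x y) z + D (A.br y z) x + D (A.br z x) y = 0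
  r3 : ∀ x y a, θ (A.br x y) a = θ x a * ρ y - θ y a * ρ x
  r4 : ∀ a b x, D a b * ρ x = ρ x * D a b + ρ (A.tr a b x)
  r5 : ∀ x a b, θ x (A.br a b) = ρ a * θ x b - ρ b * θ x a
  r6 : ∀ a b x y, D a b * θ x y = θ x y * D a b + θ (A.tr a b x) y + θ x (A.tr a b y)
  r7 : ∀ a x y z, θ a (A.tr x y z) = θ y z * θ a x - θ x z * θ a y + D x y * θ a z

/-- A representation of a modified Rota-Baxter Lie-Yamaguti algebra `(L, R)`:
a representation of the underlying Lie-Yamaguti algebra together with a linear map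
`RV` satisfying (4.1) and (4.2). -/
structure MRBRep (K L V : Type*) [Field K] [AddCommGroup L] [Module K L]
    [AddCommGroup V] [Module K V] (A : LieYamaguti K L) (R : L →ₗ[K] L)
    extends LYRep K L V A where
  RV : V →ₗ[K] V
  c41 : ∀ (x : L) (u : V), ρ (R x) (RV u) = RV (ρ (R x) u + ρ x (RV u)) - ρ x u
  c42 : ∀ (x y : L) (u : V),
    θ (R x) (R y) (RV u) =
      RV (θ (R x) (R y) u + θ (R x) y (RV u) + θ x (R y) (RV u) + θ x y u)
      - θ (R x) y u - θ x y (RV u) - θ x (R y) u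

/-!
Expanding `ρ_R` and `θ_R`, every term in which an operator at `R`-arguments is applied to `R_V u`
is rewritten by (4.1), resp. (4.2), once at the arguments `(R x, …)` and once at `(x, …)`; after
pushing `R_V` through the sums, both sides become the same formal combination of terms.
-/

namespace ModifiedRotaBaxter

variable {L V F : Type*} [AddCommGroup V] [FunLike F V V] [AddMonoidHomClass F V V]

def CompatAction (R : L → L) (RV : V → V) (ρ : L → V → V) : Prop :=
  ∀ x u, ρ (R x) (RV u) = RV (ρ (R x) u + ρ x (RV u)) - ρ x u

def CompatBiaction (R : L → L) (RV : V → V) (θ : L → L → V → V) : Prop :=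
  ∀ x y u, θ (R x) (R y) (RV u) =
    RV (θ (R x) (R y) u + θ (R x) y (RV u) + θ x (R y) (RV u) + θ x y u)
      - θ (R x) y u - θ x y (RV u) - θ x (R y) u

def descendentAction (R : L → L) (RV : V → V) (ρ : L → V → V) : L → V → V :=
  fun x u => ρ (R x) u - RV (ρ x u)

def descendentBiaction (R : L → L) (RV : V → V) (θ : L → L → V → V) : L → L → V → V :=
  fun x y u => θ (R x) (R y) u + θ (R x) y u + θ x (R y) u - RV (θ x y u)

theorem CompatAction.descendent {R : L → L} {RV : F} {ρ : L → V → V}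
    (h : CompatAction R RV ρ) : CompatAction R RV (descendentAction R RV ρ) := by
  intro x u
  simp only [descendentAction, h (R x), h x, map_add, map_sub]
  abel

theorem CompatBiaction.descendent {R : L → L} {RV : F} {θ : L → L → V → V}
    (h : CompatBiaction R RV θ) : CompatBiaction R RV (descendentBiaction R RV θ) := by
  intro x y u
  simp only [descendentBiaction, h (R x) (R y), h (R x) y, h x (R y), h x y, map_add,
    map_sub]
  abel

end ModifiedRotaBaxter

theorem descendent_rep_RV_compat_general (K L V : Type*) [Field K]
    [AddCommGroup L] [Module K L] [AddCommGroup V] [Module K V]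
    (A : LieYamaguti K L) (R : L →ₗ[K] L)
    (rep : MRBRep K L V A R) :
    ∀ (ρR : L → V → V) (θR : L → L → V → V),
      (∀ x u, ρR x u = rep.ρ (R x) u - rep.RV (rep.ρ x u)) →
      (∀ x y u, θR x y u
          = rep.θ (R x) (R y) u + rep.θ (R x) y u + rep.θ x (R y) u - rep.RV (rep.θ x y u)) →
      (∀ x u, ρR (R x) (rep.RV u)
          = rep.RV (ρR (R x) u + ρR x (rep.RV u)) - ρR x u) ∧
      (∀ x y u, θR (R x) (R y) (rep.RV u)
          = rep.RV (θR (R x) (R y) u + θR (R x) y (rep.RV u) + θR x (R y) (rep.RV u)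
              + θR x y u)
            - θR (R x) y u - θR x y (rep.RV u) - θR x (R y) u) := by
  intro ρR θR hρR hθR
  obtain rfl : ρR = ModifiedRotaBaxter.descendentAction R rep.RV (fun x => rep.ρ x) :=
    funext₂ hρR
  obtain rfl : θR = ModifiedRotaBaxter.descendentBiaction R rep.RV (fun x y => rep.θ x y) :=
    funext₃ hθR
  exact ⟨ModifiedRotaBaxter.CompatAction.descendent (RV := rep.RV) rep.c41,
    ModifiedRotaBaxter.CompatBiaction.descendent (RV := rep.RV) rep.c42⟩

/-- `R_V` satisfies the modified Rota-Baxter compatibility conditions (4.1), (4.2)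
with respect to `ρ_R` and `θ_R`. -/
theorem descendent_rep_RV_compat (K L V : Type*) [Field K] [CharZero K]
    [AddCommGroup L] [Module K L] [AddCommGroup V] [Module K V]
    (A : LieYamaguti K L) (R : L →ₗ[K] L) (hR : IsMRB A R)
    (rep : MRBRep K L V A R) :
    ∀ (ρR : L → V → V) (θR : L → L → V → V),
      (∀ x u, ρR x u = rep.ρ (R x) u - rep.RV (rep.ρ x u)) →
      (∀ x y u, θR x y u
          = rep.θ (R x) (R y) u + rep.θ (R x) y u + rep.θ x (R y) u - rep.RV (rep.θ x y u)) →
      (∀ x u, ρR (R x) (rep.RV u)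
          = rep.RV (ρR (R x) u + ρR x (rep.RV u)) - ρR x u) ∧
      (∀ x y u, θR (R x) (R y) (rep.RV u)
          = rep.RV (θR (R x) (R y) u + θR (R x) y (rep.RV u) + θR x (R y) (rep.RV u)
              + θR x y u)
            - θR (R x) y u - θR x y (rep.RV u) - θR x (R y) u) :=
  descendent_rep_RV_compat_general K L V A R rep
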